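/- The tracial geometric mean is monotone in each argument: if X ≤ X₁ and Y ≤ Y₁ in the Loewner order (all matrices positive semidefinite ℓ×ℓ complex), then tgm(X,Y) ≤ tgm(X₁,Y₁). -/

import Mathlib

/-!
`√X Y √X = B Bᴴ` and `√Y X √Y = Bᴴ B` for `B = √X √Y`, so the two matrices have the same
characteristic polynomial, hence the same eigenvalues, and `tgm` is symmetric. In the second
argument `tgm` is monotone because congruence by `√X`, the matrix square root (operator
monotonicity) and the trace all preserve the Loewner order; symmetry transfers this to the first
argument.
-/

open Matrix
open scoped ComplexOrder

namespace Matrix.PosSemidef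

/-- The square root of a positive semidefinite matrix, as defined in the older Mathlib. -/
noncomputable def sqrt {𝕜 : Type*} [RCLike 𝕜] {n : Type*} [Fintype n] [DecidableEq n]
    {A : Matrix n n 𝕜} (hA : A.PosSemidef) : Matrix n n 𝕜 :=
  hA.1.eigenvectorUnitary.1 * diagonal ((↑) ∘ (√·) ∘ hA.1.eigenvalues) *
  (star hA.1.eigenvectorUnitary : Matrix n n 𝕜)

lemma posSemidef_sqrt {𝕜 : Type*} [RCLike 𝕜] {n : Type*} [Fintype n] [DecidableEq n]
    {A : Matrix n n 𝕜} (hA : A.PosSemidef) : PosSemidef hA.sqrt := by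
  apply PosSemidef.mul_mul_conjTranspose_same
  refine posSemidef_diagonal_iff.mpr fun i ↦ ?_
  rw [Function.comp_apply, RCLike.nonneg_iff]
  constructor
  · simp only [RCLike.ofReal_re]
    exact Real.sqrt_nonneg _
  · simp only [RCLike.ofReal_im]

end Matrix.PosSemidef

/-- The product `√X * Y * √X` is positive semidefinite. -/
theorem sqrt_mul_mul_sqrt_posSemidef {n : Type*} [Fintype n] [DecidableEq n]
    {X Y : Matrix n n ℂ} (hX : X.PosSemidef) (hY : Y.PosSemidef) :
    (hX.sqrt * Y * hX.sqrt).PosSemidef := by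
  have h := hY.conjTranspose_mul_mul_same (B := hX.sqrt)
  rwa [hX.posSemidef_sqrt.isHermitian.eq] at h

/-- The tracial geometric mean `tgm(X,Y) = trace √(√X·Y·√X)`. -/
noncomputable def tgm {n : Type*} [Fintype n] [DecidableEq n]
    {X Y : Matrix n n ℂ} (hX : X.PosSemidef) (hY : Y.PosSemidef) : ℝ :=
  ((sqrt_mul_mul_sqrt_posSemidef hX hY).sqrt.trace).re

open scoped MatrixOrder

namespace Matrix

variable {𝕜 : Type*} [RCLike 𝕜] {n : Type*} [Fintype n]

lemma re_trace_le_re_trace {A B : Matrix n n 𝕜} (h : A ≤ B) :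
    RCLike.re A.trace ≤ RCLike.re B.trace := by
  have := (le_iff.mp h).trace_nonneg
  rw [trace_sub, sub_nonneg] at this
  exact (RCLike.le_iff_re_im.mp this).1

namespace PosSemidef

variable [DecidableEq n]

lemma sqrt_eq_cfc {A : Matrix n n 𝕜} (hA : A.PosSemidef) :
    hA.sqrt = cfc Real.sqrt A := by
  rw [hA.1.cfc_eq]
  rfl

lemma charpoly_sqrt {A : Matrix n n 𝕜} (hA : A.PosSemidef) :
    hA.sqrt.charpoly = ∏ i, (Polynomial.X - Polynomial.C (√(hA.1.eigenvalues i) : 𝕜)) := by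
  rw [hA.sqrt_eq_cfc, hA.1.charpoly_cfc_eq]

lemma trace_sqrt_eq_of_charpoly_eq {A B : Matrix n n 𝕜}
    (hA : A.PosSemidef) (hB : B.PosSemidef) (h : A.charpoly = B.charpoly) :
    hA.sqrt.trace = hB.sqrt.trace := by
  rw [trace_eq_neg_charpoly_nextCoeff, trace_eq_neg_charpoly_nextCoeff, charpoly_sqrt,
    charpoly_sqrt, (hA.1.eigenvalues_eq_eigenvalues_iff hB.1).mpr h]

lemma sqrt_eq_cfcSqrt {A : Matrix n n 𝕜} (hA : A.PosSemidef) : hA.sqrt = CFC.sqrt A := by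
  rw [hA.sqrt_eq_cfc, CFC.sqrt_eq_real_sqrt A hA.nonneg, cfcₙ_eq_cfc]

lemma sqrt_mul_sqrt_self {A : Matrix n n 𝕜} (hA : A.PosSemidef) : hA.sqrt * hA.sqrt = A := by
  rw [hA.sqrt_eq_cfcSqrt, CFC.sqrt_mul_sqrt_self A hA.nonneg]

open scoped Matrix.Norms.L2Operator in
lemma sqrt_le_sqrt {A B : Matrix n n ℂ} (hA : A.PosSemidef) (hB : B.PosSemidef) (h : A ≤ B) :
    hA.sqrt ≤ hB.sqrt := by
  rw [hA.sqrt_eq_cfcSqrt, hB.sqrt_eq_cfcSqrt]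
  exact CFC.sqrt_le_sqrt A B h

end PosSemidef

end Matrix

section tgm

variable {n : Type*} [Fintype n] [DecidableEq n]

lemma tgm_comm {X Y : Matrix n n ℂ} (hX : X.PosSemidef) (hY : Y.PosSemidef) :
    tgm hX hY = tgm hY hX := by
  have hXY : hX.sqrt * Y * hX.sqrt = (hX.sqrt * hY.sqrt) * (hY.sqrt * hX.sqrt) := by
    conv_lhs => rw [← hY.sqrt_mul_sqrt_self]
    simp only [mul_assoc]
  have hYX : hY.sqrt * X * hY.sqrt = (hY.sqrt * hX.sqrt) * (hX.sqrt * hY.sqrt) := by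
    conv_lhs => rw [← hX.sqrt_mul_sqrt_self]
    simp only [mul_assoc]
  exact congrArg Complex.re <| PosSemidef.trace_sqrt_eq_of_charpoly_eq _ _ <| by
    rw [hXY, hYX, charpoly_mul_comm]

lemma tgm_le_tgm_right {X Y Y₁ : Matrix n n ℂ} (hX : X.PosSemidef) (hY : Y.PosSemidef)
    (hY₁ : Y₁.PosSemidef) (h : Y ≤ Y₁) : tgm hX hY ≤ tgm hX hY₁ :=
  re_trace_le_re_trace <| PosSemidef.sqrt_le_sqrt _ _ <|
    conjugate_le_conjugate_of_nonneg h hX.posSemidef_sqrt.nonneg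

end tgm

/-- Monotonicity of `tgm` in both arguments with respect to the Loewner order. -/
theorem tgm_mono {ℓ : ℕ} {X X₁ Y Y₁ : Matrix (Fin ℓ) (Fin ℓ) ℂ}
    (hX : X.PosSemidef) (hX₁ : X₁.PosSemidef) (hY : Y.PosSemidef) (hY₁ : Y₁.PosSemidef)
    (hXle : (X₁ - X).PosSemidef) (hYle : (Y₁ - Y).PosSemidef) :
    tgm hX hY ≤ tgm hX₁ hY₁ :=
  calc tgm hX hY ≤ tgm hX hY₁ := tgm_le_tgm_right hX hY hY₁ (le_iff.mpr hYle)
    _ = tgm hY₁ hX := tgm_comm hX hY₁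
    _ ≤ tgm hY₁ hX₁ := tgm_le_tgm_right hY₁ hX hX₁ (le_iff.mpr hXle)
    _ = tgm hX₁ hY₁ := tgm_comm hY₁ hX₁
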